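/- arXiv:2101.11558 — 2 statements merged into one kernel-verified Lean document; each statement's English description precedes it below -/
import Mathlib

section
/- Let Φ_w = (G, φ, w) be a positively weighted T-gain graph on a graph G with positive edge weight function w, and let G_w be the underlying positively weighted graph (gain function identically 1). Then the adjacency matrices A(Φ_w) and A(G_w) are cospectral if and only if Φ = (G, φ) is balanced. -/
/-!
The `(u, v)` entry of `A(Φ_w)^k` is the sum, over walks `W` of length `k` from `u` to `v`, of
`φ(W) w(W)`, so `tr A(Φ_w)^k = ∑ φ(W) w(W)` and `tr A(G_w)^k = ∑ w(W)` over closed walks of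
length `k`. Both matrices are Hermitian, so they are cospectral iff these traces agree for all `k`
(the power sums of the eigenvalues determine them). If `Φ` is balanced, every closed walk has gain
`1`: shortcutting it with `bypass` only cuts off cycles and back-and-forth edges. Conversely,
`Re φ(W) ≤ 1` and `w(W) > 0`, so equal traces at `k = length C` force `Re φ(C) = 1`, i.e.
`φ(C) = 1`, for every cycle `C`.
-/

open Matrix
open scoped Classical

noncomputable section

namespace GG

variable {V : Type*}

/-- The gain of a walk: product of the gains of its oriented edges. -/
def walkGain {G : SimpleGraph V} (φ : V → V → ℂ) {u v : V} (p : G.Walk u v) : ℂ :=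
  (p.darts.map (fun d => φ d.toProd.1 d.toProd.2)).prod

/-- `φ` is a `𝕋`-gain function on `G`: unit modulus on edges, inverse under reversal. -/
def IsGain (G : SimpleGraph V) (φ : V → V → ℂ) : Prop :=
  (∀ i j, G.Adj i j → ‖φ i j‖ = 1) ∧ (∀ i j, G.Adj i j → φ j i = (φ i j)⁻¹)

/-- Adjacency matrix of a gain graph. -/
def gainAdj [Fintype V] [DecidableEq V] (G : SimpleGraph V) (φ : V → V → ℂ) :
    Matrix V V ℂ := fun i j => if G.Adj i j then φ i j else 0

/-- A gain graph is balanced if every cycle has gain 1. -/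
def GBalanced (G : SimpleGraph V) (φ : V → V → ℂ) : Prop :=
  ∀ (u : V) (c : G.Walk u u), c.IsCycle → walkGain φ c = 1

/-- All shortest paths between any pair of vertices have the same gain. -/
def DistCompatible (G : SimpleGraph V) (φ : V → V → ℂ) : Prop :=
  ∀ (s t : V) (p q : G.Walk s t), p.length = G.dist s t → q.length = G.dist s t →
    walkGain φ p = walkGain φ q

/-- The set of gains of shortest `s`-`t` paths. -/
def shortestGains (G : SimpleGraph V) (φ : V → V → ℂ) (s t : V) : Set ℂ :=
  {z | ∃ p : G.Walk s t, p.length = G.dist s t ∧ walkGain φ p = z}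

/-- The element of `S` maximizing the real part, ties broken by maximal imaginary part
(correct for finite nonempty sets of gains). -/
def lexMaxGain (S : Set ℂ) : ℂ :=
  ⟨sSup (Complex.re '' S), sSup (Complex.im '' {z ∈ S | z.re = sSup (Complex.re '' S)})⟩

/-- The element of `S` minimizing the real part, ties broken by minimal imaginary part. -/
def lexMinGain (S : Set ℂ) : ℂ :=
  ⟨sInf (Complex.re '' S), sInf (Complex.im '' {z ∈ S | z.re = sInf (Complex.re '' S)})⟩

/-- The maximum gain distance matrix `D^max_<(Φ)` with respect to a strict order `lt`. -/
def Dmax [Fintype V] [DecidableEq V] (G : SimpleGraph V) (φ : V → V → ℂ)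
    (lt : V → V → Prop) : Matrix V V ℂ := fun s t =>
  if lt s t then lexMaxGain (shortestGains G φ s t) * (G.dist s t : ℂ)
  else if lt t s then (starRingEnd ℂ) (lexMaxGain (shortestGains G φ t s)) * (G.dist s t : ℂ)
  else 0

/-- The minimum gain distance matrix `D^min_<(Φ)` with respect to a strict order `lt`. -/
def Dmin [Fintype V] [DecidableEq V] (G : SimpleGraph V) (φ : V → V → ℂ)
    (lt : V → V → Prop) : Matrix V V ℂ := fun s t =>
  if lt s t then lexMinGain (shortestGains G φ s t) * (G.dist s t : ℂ)
  else if lt t s then (starRingEnd ℂ) (lexMinGain (shortestGains G φ t s)) * (G.dist s t : ℂ)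
  else 0

/-- Vertex order independence: the gain distance matrices agree for the standard order
and its reverse. -/
def OrderIndependent [Fintype V] [DecidableEq V] [LinearOrder V] (G : SimpleGraph V)
    (φ : V → V → ℂ) : Prop :=
  Dmax G φ (· < ·) = Dmax G φ (fun a b => b < a) ∧
  Dmin G φ (· < ·) = Dmin G φ (fun a b => b < a)

/-- The largest (real) eigenvalue of a matrix. -/
def maxEig [Fintype V] [DecidableEq V] (A : Matrix V V ℂ) : ℝ :=
  sSup {r : ℝ | (r : ℂ) ∈ spectrum ℂ A}

/-- The spectral radius of a matrix. -/
def specRad [Fintype V] [DecidableEq V] (A : Matrix V V ℂ) : ℝ :=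
  sSup {r : ℝ | ∃ z ∈ spectrum ℂ A, ‖z‖ = r}

/-- The distance matrix of the underlying graph, as a complex matrix. -/
def distMatrix [Fintype V] [DecidableEq V] (G : SimpleGraph V) : Matrix V V ℂ :=
  fun i j => (G.dist i j : ℂ)

/-- Weighted gain adjacency matrix `A(Φ_w)`. -/
def wGainAdj [Fintype V] [DecidableEq V] (G : SimpleGraph V) (φ : V → V → ℂ)
    (w : V → V → ℝ) : Matrix V V ℂ := fun i j => if G.Adj i j then φ i j * (w i j : ℂ) else 0

/-- Weighted adjacency matrix `A(G_w)` of the underlying weighted graph. -/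
def wAdj [Fintype V] [DecidableEq V] (G : SimpleGraph V) (w : V → V → ℝ) :
    Matrix V V ℂ := fun i j => if G.Adj i j then (w i j : ℂ) else 0

end GG

open Polynomial in
theorem Multiset.sum_map_eval_eq_of_sum_map_pow_eq {R : Type*} [CommSemiring R]
    {s t : Multiset R} (h : ∀ k : ℕ, (s.map (· ^ k)).sum = (t.map (· ^ k)).sum) (P : R[X]) :
    (s.map P.eval).sum = (t.map P.eval).sum := by
  induction P using Polynomial.induction_on' with
  | add P Q hP hQ => simp only [eval_add, Multiset.sum_map_add, hP, hQ]
  | monomial n a => simp only [eval_monomial, Multiset.sum_map_mul_left, h n]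

open Polynomial in
theorem Multiset.eq_of_sum_map_pow_eq {K : Type*} [Field K] [CharZero K] {s t : Multiset K}
    (h : ∀ k : ℕ, (s.map (· ^ k)).sum = (t.map (· ^ k)).sum) : s = t := by
  ext a
  -- a polynomial vanishing on `s + t` except at `a` isolates the multiplicity of `a`
  set P : K[X] := ∏ b ∈ (s + t).toFinset.erase a, (X - C b)
  have hPa : P.eval a ≠ 0 := by
    simp only [P, eval_prod, eval_sub, eval_X, eval_C]
    exact Finset.prod_ne_zero_iff.2 fun b hb => sub_ne_zero.2 (Finset.ne_of_mem_erase hb).symm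
  have hsum : ∀ m ≤ s + t, (m.map P.eval).sum = m.count a • P.eval a := fun m hm =>
    sum_map_eq_nsmul_single a fun b hba hb => by
      simp only [P, eval_prod, eval_sub, eval_X, eval_C]
      exact Finset.prod_eq_zero
        (Finset.mem_erase.2 ⟨hba, mem_toFinset.2 (mem_of_le hm hb)⟩) (sub_self b)
  have hP := sum_map_eval_eq_of_sum_map_pow_eq h P
  rw [hsum s (le_add_right s t), hsum t (le_add_left t s), nsmul_eq_mul, nsmul_eq_mul] at hP
  exact_mod_cast mul_right_cancel₀ hPa hP

namespace Matrix.IsHermitian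

variable {𝕜 n : Type*} [RCLike 𝕜] [Fintype n] [DecidableEq n] {A B : Matrix n n 𝕜}

theorem trace_pow (hA : A.IsHermitian) (k : ℕ) :
    (A ^ k).trace = ∑ i, (hA.eigenvalues i : 𝕜) ^ k := by
  conv_lhs => rw [hA.spectral_theorem]
  rw [← map_pow, Unitary.conjStarAlgAut_apply, trace_mul_cycle,
    Unitary.star_mul_self_of_mem hA.eigenvectorUnitary.2, one_mul, diagonal_pow, trace_diagonal]
  rfl

open Polynomial in
theorem charpoly_eq_iff_trace_pow_eq (hA : A.IsHermitian) (hB : B.IsHermitian) :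
    A.charpoly = B.charpoly ↔ ∀ k : ℕ, (A ^ k).trace = (B ^ k).trace := by
  refine ⟨fun h k => by
    rw [hA.trace_pow, hB.trace_pow, (hA.eigenvalues_eq_eigenvalues_iff hB).2 h], fun h => ?_⟩
  have heig : Finset.univ.val.map (fun i => (hA.eigenvalues i : 𝕜)) =
      Finset.univ.val.map (fun i => (hB.eigenvalues i : 𝕜)) :=
    Multiset.eq_of_sum_map_pow_eq fun k => by
      simpa only [Multiset.map_map, Function.comp_def, ← Finset.sum_eq_multiset_sum,
        hA.trace_pow, hB.trace_pow] using h k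
  rw [hA.charpoly_eq, hB.charpoly_eq, Finset.prod_eq_multiset_prod, Finset.prod_eq_multiset_prod]
  have := congrArg (fun s => (s.map fun z => X - C z).prod) heig
  rw [Multiset.map_map, Multiset.map_map] at this
  exact this

end Matrix.IsHermitian

theorem Complex.eq_one_of_sum_mul_ofReal_eq_sum {ι : Type*} {s : Finset ι} {g : ι → ℂ}
    {r : ι → ℝ} (hg : ∀ i ∈ s, ‖g i‖ = 1) (hr : ∀ i ∈ s, 0 < r i)
    (h : ∑ i ∈ s, g i * r i = ∑ i ∈ s, (r i : ℂ)) : ∀ i ∈ s, g i = 1 := by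
  have hle : ∀ i ∈ s, (g i * r i).re ≤ r i := fun i hi => by
    rw [re_mul_ofReal]
    exact mul_le_of_le_one_left (hr i hi).le ((re_le_norm _).trans (hg i hi).le)
  have hre := congrArg re h
  simp only [re_sum, ofReal_re] at hre
  intro i hi
  have hre_i : (g i).re = 1 := by
    have := (Finset.sum_eq_sum_iff_of_le hle).1 hre i hi
    rwa [re_mul_ofReal, mul_eq_right₀ (hr i hi).ne'] at this
  have him_i : (g i).im = 0 := abs_re_eq_norm.1 (by rw [hre_i, hg i hi, abs_one])
  exact Complex.ext hre_i him_i

namespace GG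

open SimpleGraph Walk

variable {V : Type*} {G : SimpleGraph V} {φ : V → V → ℂ} {w : V → V → ℝ}

section Walks

variable {u v x : V}

@[simp]
theorem walkGain_nil (φ : V → V → ℂ) : walkGain φ (nil : G.Walk u u) = 1 := rfl

@[simp]
theorem walkGain_cons (φ : V → V → ℂ) (h : G.Adj u v) (p : G.Walk v x) :
    walkGain φ (cons h p) = φ u v * walkGain φ p := by
  simp [walkGain]

theorem walkGain_append (φ : V → V → ℂ) (p : G.Walk u v) (q : G.Walk v x) :
    walkGain φ (p.append q) = walkGain φ p * walkGain φ q := by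
  simp [walkGain, darts_append]

theorem walkGain_mul (φ ψ : V → V → ℂ) (p : G.Walk u v) :
    walkGain (fun i j => φ i j * ψ i j) p = walkGain φ p * walkGain ψ p :=
  List.prod_map_mul

theorem IsGain.norm_walkGain (hφ : IsGain G φ) (p : G.Walk u v) : ‖walkGain φ p‖ = 1 := by
  induction p with
  | nil => simp
  | cons h p ih => simp [hφ.1 _ _ h, ih]

theorem IsGain.mul_apply_swap (hφ : IsGain G φ) (h : G.Adj u v) : φ u v * φ v u = 1 := by
  rw [hφ.2 u v h, mul_inv_cancel₀]
  exact norm_ne_zero_iff.1 (by rw [hφ.1 u v h]; exact one_ne_zero)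

theorem IsGain.star_apply (hφ : IsGain G φ) (h : G.Adj u v) : star (φ u v) = φ v u := by
  rw [hφ.2 u v h, RCLike.inv_eq_conj (hφ.1 u v h)]
  rfl

def walkWeight (w : V → V → ℝ) (p : G.Walk u v) : ℝ :=
  (p.darts.map fun d => w d.fst d.snd).prod

theorem walkGain_ofReal (w : V → V → ℝ) (p : G.Walk u v) :
    walkGain (fun i j => (w i j : ℂ)) p = walkWeight w p := by
  induction p with
  | nil => simp [walkWeight]
  | cons h p ih => simp [walkWeight, ih]

theorem walkWeight_pos (hpos : ∀ i j, G.Adj i j → 0 < w i j) (p : G.Walk u v) :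
    0 < walkWeight w p :=
  List.prod_pos fun _ hx => by
    obtain ⟨d, -, rfl⟩ := List.mem_map.1 hx
    exact hpos _ _ d.adj

end Walks

section Balanced

variable {u v : V}

theorem GBalanced.walkGain_cons_of_isPath (hφ : IsGain G φ) (hb : GBalanced G φ)
    (h : G.Adj u v) {q : G.Walk v u} (hq : q.IsPath) : walkGain φ (cons h q) = 1 := by
  by_cases he : s(u, v) ∈ q.edges
  · -- then `q` is the edge `vu` itself and `cons h q` just goes back and forth
    cases q with
    | nil => exact absurd rfl h.ne
    | cons h' r =>
      rw [cons_isPath_iff] at hq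
      rcases List.mem_cons.1 he with he | he
      · rcases Sym2.eq_iff.1 he with ⟨huv, -⟩ | ⟨rfl, -⟩
        · exact absurd huv h.ne
        · rw [(isPath_iff_nil.1 hq.1).eq_nil]
          simpa using hφ.mul_apply_swap h
      · exact absurd (r.snd_mem_support_of_mem_edges he) hq.2
  · exact hb u _ ((cons_isCycle_iff q h).2 ⟨hq, he⟩)

theorem GBalanced.walkGain_bypass [DecidableEq V] (hφ : IsGain G φ) (hb : GBalanced G φ)
    (p : G.Walk u v) : walkGain φ p.bypass = walkGain φ p := by
  induction p with
  | nil => rfl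
  | @cons u _ _ h p ih =>
    simp only [bypass]
    split_ifs with hs
    · calc walkGain φ (p.bypass.dropUntil u hs)
          = walkGain φ (cons h (p.bypass.takeUntil u hs)) *
              walkGain φ (p.bypass.dropUntil u hs) := by
            rw [hb.walkGain_cons_of_isPath hφ h (p.bypass_isPath.takeUntil hs), one_mul]
        _ = walkGain φ (cons h p) := by
            rw [walkGain_cons, mul_assoc, ← walkGain_append, take_spec, ih, walkGain_cons]
    · rw [walkGain_cons, walkGain_cons, ih]

theorem GBalanced.walkGain_eq_one (hφ : IsGain G φ) (hb : GBalanced G φ) (p : G.Walk u u) :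
    walkGain φ p = 1 := by
  classical
  rw [← hb.walkGain_bypass hφ p, (isPath_iff_nil.1 p.bypass_isPath).eq_nil, walkGain_nil]

end Balanced

section AdjacencyMatrix

variable [Fintype V] [DecidableEq V]

theorem gainAdj_pow_apply (c : V → V → ℂ) (k : ℕ) (u v : V) :
    (gainAdj G c ^ k) u v = ∑ p ∈ G.finsetWalkLength k u v, walkGain c p := by
  induction k generalizing u with
  | zero =>
    obtain rfl | h := eq_or_ne u v <;> simp [finsetWalkLength, one_apply, *]
  | succ k ih =>
    rw [pow_succ', mul_apply, finsetWalkLength, Finset.sum_biUnion]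
    · simp only [gainAdj, ite_mul, zero_mul, Finset.sum_ite, Finset.sum_const_zero, add_zero,
        Finset.sum_map]
      refine (Finset.sum_subtype _ (p := (· ∈ G.neighborSet u)) (fun x => by simp) _).trans
        (Finset.sum_congr rfl fun x _ => ?_)
      rw [ih, Finset.mul_sum]
      exact Finset.sum_congr rfl fun p _ => (walkGain_cons c x.2 p).symm
    · rintro ⟨x, hx⟩ - ⟨y, hy⟩ - hxy
      rw [Function.onFun, Finset.disjoint_left]
      rintro p hpx hpy
      simp only [Finset.mem_map] at hpx hpy
      obtain ⟨px, -, rfl⟩ := hpx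
      obtain ⟨py, -, hp⟩ := hpy
      cases hp
      exact hxy rfl

theorem trace_gainAdj_pow (c : V → V → ℂ) (k : ℕ) :
    (gainAdj G c ^ k).trace = ∑ u, ∑ p ∈ G.finsetWalkLength k u u, walkGain c p := by
  simp only [trace, diag, gainAdj_pow_apply]

theorem isHermitian_gainAdj {c : V → V → ℂ}
    (hc : ∀ i j, G.Adj i j → star (c i j) = c j i) : (gainAdj G c).IsHermitian := by
  ext i j
  by_cases h : G.Adj i j
  · simp [gainAdj, h, h.symm, hc j i h.symm]
  · simp [gainAdj, h, G.adj_comm]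

theorem wGainAdj_eq_gainAdj : wGainAdj G φ w = gainAdj G fun i j => φ i j * w i j := rfl

theorem wAdj_eq_gainAdj : wAdj G w = gainAdj G fun i j => (w i j : ℂ) := rfl

theorem isHermitian_wGainAdj (hφ : IsGain G φ) (hsymm : ∀ i j, w i j = w j i) :
    (wGainAdj G φ w).IsHermitian :=
  isHermitian_gainAdj fun i j h => by
    rw [star_mul', hφ.star_apply h, Complex.star_def, Complex.conj_ofReal, hsymm]

theorem isHermitian_wAdj (hsymm : ∀ i j, w i j = w j i) : (wAdj G w).IsHermitian :=
  isHermitian_gainAdj fun i j _ => by rw [Complex.star_def, Complex.conj_ofReal, hsymm]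

theorem trace_wGainAdj_pow (k : ℕ) : (wGainAdj G φ w ^ k).trace =
    ∑ u, ∑ p ∈ G.finsetWalkLength k u u, walkGain φ p * walkWeight w p := by
  simp only [wGainAdj_eq_gainAdj, trace_gainAdj_pow, walkGain_mul, walkGain_ofReal]

theorem trace_wAdj_pow (k : ℕ) :
    (wAdj G w ^ k).trace = ∑ u, ∑ p ∈ G.finsetWalkLength k u u, (walkWeight w p : ℂ) := by
  simp only [wAdj_eq_gainAdj, trace_gainAdj_pow, walkGain_ofReal]

theorem GBalanced.trace_wGainAdj_pow_eq (hφ : IsGain G φ) (hb : GBalanced G φ) (k : ℕ) :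
    (wGainAdj G φ w ^ k).trace = (wAdj G w ^ k).trace := by
  simp only [trace_wGainAdj_pow, trace_wAdj_pow, hb.walkGain_eq_one hφ, one_mul]

theorem GBalanced.of_trace_wGainAdj_pow (hφ : IsGain G φ)
    (hpos : ∀ i j, G.Adj i j → 0 < w i j)
    (h : ∀ k : ℕ, (wGainAdj G φ w ^ k).trace = (wAdj G w ^ k).trace) : GBalanced G φ := by
  intro u c _
  have hk := h c.length
  rw [trace_wGainAdj_pow, trace_wAdj_pow, Finset.sum_sigma', Finset.sum_sigma'] at hk
  exact Complex.eq_one_of_sum_mul_ofReal_eq_sum (fun p _ => hφ.norm_walkGain p.2)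
    (fun p _ => walkWeight_pos hpos p.2) hk ⟨u, c⟩
    (Finset.mem_sigma.2 ⟨Finset.mem_univ u, mem_finsetWalkLength_iff.2 rfl⟩)

end AdjacencyMatrix

/-- `A(Φ_w)` and `A(G_w)` are cospectral iff `Φ` is balanced. -/
theorem weighted_cospectral_iff_balanced {V : Type*} [Fintype V] [DecidableEq V]
    (G : SimpleGraph V) (φ : V → V → ℂ) (hφ : IsGain G φ) (w : V → V → ℝ)
    (hsymm : ∀ i j, w i j = w j i) (hpos : ∀ i j, G.Adj i j → 0 < w i j) :
    (wGainAdj G φ w).charpoly = (wAdj G w).charpoly ↔ GBalanced G φ := by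
  rw [(isHermitian_wGainAdj hφ hsymm).charpoly_eq_iff_trace_pow_eq (isHermitian_wAdj hsymm)]
  exact ⟨GBalanced.of_trace_wGainAdj_pow hφ hpos, fun hb => hb.trace_wGainAdj_pow_eq hφ⟩

end GG
end
end

section
/- A T-gain graph Φ = (G, φ) on a connected graph fails to be vertex order-independent if and only if there exist vertices v_s, v_t such that either two shortest paths from v_s to v_t in P^max(v_s,v_t) have different gains, or two shortest paths from v_s to v_t in P^min(v_s,v_t) have different gains. -/
open Matrix
open scoped Classical

noncomputable section

namespace GG

variable {V : Type*}

/-! Reversing a walk conjugates its gain, so the shortest `t`-`s` gains are the conjugates of the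
shortest `s`-`t` gains. Hence the two vertex orders give the same `(s, t)` entry exactly when
choosing the gain of maximal real part with ties broken by maximal imaginary part agrees with
breaking ties by minimal imaginary part, i.e. when the maximal real part is attained by a single
gain (and likewise for the minimum). -/

open scoped ComplexConjugate

theorem sSup_eq_sInf_iff_subsingleton {A : Set ℝ} (h₁ : BddAbove A) (h₂ : BddBelow A) :
    sSup A = sInf A ↔ A.Subsingleton := by
  refine ⟨fun h x hx y hy => ?_, fun h => ?_⟩
  · exact le_antisymm ((le_csSup h₁ hx).trans (h ▸ csInf_le h₂ hy))
      ((le_csSup h₁ hy).trans (h ▸ csInf_le h₂ hx))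
  · rcases h.eq_empty_or_singleton with rfl | ⟨x, rfl⟩ <;> simp

section ComplexSets

theorem subsingleton_of_subsingleton_im_image {T : Set ℂ} {c : ℝ} (hre : ∀ z ∈ T, z.re = c)
    (h : (Complex.im '' T).Subsingleton) : T.Subsingleton := fun z hz w hw =>
  Complex.ext ((hre z hz).trans (hre w hw).symm) (h ⟨z, hz, rfl⟩ ⟨w, hw, rfl⟩)

theorem re_image_conj (S : Set ℂ) : Complex.re '' (conj '' S) = Complex.re '' S := by
  simp [Set.image_image]

theorem im_image_conj (S : Set ℂ) : Complex.im '' (conj '' S) = -(Complex.im '' S) := by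
  simp [Set.image_image, ← Set.image_neg_eq_neg]

theorem image_conj_sep_re_eq (S : Set ℂ) (c : ℝ) :
    {z ∈ conj '' S | z.re = c} = conj '' {z ∈ S | z.re = c} := by
  ext z
  constructor
  · rintro ⟨⟨w, hw, rfl⟩, hc⟩
    exact ⟨w, ⟨hw, by simpa using hc⟩, rfl⟩
  · rintro ⟨w, ⟨hw, hc⟩, rfl⟩
    exact ⟨⟨w, hw, rfl⟩, by simpa using hc⟩

theorem conj_lexMaxGain_image_conj (S : Set ℂ) :
    conj (lexMaxGain (conj '' S)) =
      ⟨sSup (Complex.re '' S), sInf (Complex.im '' {z ∈ S | z.re = sSup (Complex.re '' S)})⟩ := by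
  rw [lexMaxGain, re_image_conj, image_conj_sep_re_eq, im_image_conj, Real.sSup_neg]
  apply Complex.ext <;> simp

theorem conj_lexMinGain_image_conj (S : Set ℂ) :
    conj (lexMinGain (conj '' S)) =
      ⟨sInf (Complex.re '' S), sSup (Complex.im '' {z ∈ S | z.re = sInf (Complex.re '' S)})⟩ := by
  rw [lexMinGain, re_image_conj, image_conj_sep_re_eq, im_image_conj, Real.sInf_neg]
  apply Complex.ext <;> simp

variable {S : Set ℂ}

theorem lexMaxGain_eq_conj_lexMaxGain_image_conj_iff (hS : S.Finite) :
    lexMaxGain S = conj (lexMaxGain (conj '' S)) ↔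
      {z ∈ S | z.re = sSup (Complex.re '' S)}.Subsingleton := by
  set T := {z ∈ S | z.re = sSup (Complex.re '' S)}
  have hT : (Complex.im '' T).Finite := (hS.subset fun _ hz => hz.1).image _
  rw [conj_lexMaxGain_image_conj, lexMaxGain, Complex.ext_iff]
  simp only [true_and]
  rw [sSup_eq_sInf_iff_subsingleton hT.bddAbove hT.bddBelow]
  exact ⟨subsingleton_of_subsingleton_im_image fun _ hz => hz.2, fun h => h.image _⟩

theorem lexMinGain_eq_conj_lexMinGain_image_conj_iff (hS : S.Finite) :
    lexMinGain S = conj (lexMinGain (conj '' S)) ↔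
      {z ∈ S | z.re = sInf (Complex.re '' S)}.Subsingleton := by
  set T := {z ∈ S | z.re = sInf (Complex.re '' S)}
  have hT : (Complex.im '' T).Finite := (hS.subset fun _ hz => hz.1).image _
  rw [conj_lexMinGain_image_conj, lexMinGain, Complex.ext_iff]
  simp only [true_and]
  rw [eq_comm, sSup_eq_sInf_iff_subsingleton hT.bddAbove hT.bddBelow]
  exact ⟨subsingleton_of_subsingleton_im_image fun _ hz => hz.2, fun h => h.image _⟩

end ComplexSets

section GainGraph

variable {G : SimpleGraph V} {φ : V → V → ℂ}

theorem IsGain.apply_swap (hφ : IsGain G φ) {i j : V} (h : G.Adj i j) : φ j i = conj (φ i j) := by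
  rw [hφ.2 i j h, Complex.inv_eq_conj (hφ.1 i j h)]

theorem walkGain_reverse (hφ : IsGain G φ) {u v : V} (p : G.Walk u v) :
    walkGain φ p.reverse = conj (walkGain φ p) := by
  rw [walkGain, walkGain, SimpleGraph.Walk.darts_reverse, List.map_reverse, List.prod_reverse,
    map_list_prod, List.map_map, List.map_map]
  exact congrArg List.prod (List.map_congr_left fun d _ => hφ.apply_swap d.adj)

theorem shortestGains_self (s : V) : shortestGains G φ s s = {1} := by
  ext z
  constructor
  · rintro ⟨p, hp, rfl⟩
    rw [SimpleGraph.dist_self, SimpleGraph.Walk.length_eq_zero_iff] at hp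
    rw [hp.eq_nil]
    rfl
  · rintro rfl
    exact ⟨SimpleGraph.Walk.nil, by simp, rfl⟩

theorem shortestGains_swap (hφ : IsGain G φ) (s t : V) :
    shortestGains G φ t s = conj '' shortestGains G φ s t := by
  ext z
  constructor
  · rintro ⟨q, hq, rfl⟩
    refine ⟨walkGain φ q.reverse, ⟨q.reverse, ?_, rfl⟩, ?_⟩
    · rw [SimpleGraph.Walk.length_reverse, SimpleGraph.dist_comm, hq]
    · rw [walkGain_reverse hφ, Complex.conj_conj]
  · rintro ⟨_, ⟨p, hp, rfl⟩, rfl⟩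
    refine ⟨p.reverse, ?_, walkGain_reverse hφ p⟩
    rw [SimpleGraph.Walk.length_reverse, SimpleGraph.dist_comm, hp]

theorem shortestGains_finite [Finite V] (s t : V) : (shortestGains G φ s t).Finite := by
  have := Fintype.ofFinite V
  refine ((Set.toFinite {p : G.Walk s t | p.length = G.dist s t}).image (walkGain φ)).subset ?_
  rintro _ ⟨p, hp, rfl⟩
  exact ⟨p, hp, rfl⟩

theorem exists_shortest_walks_gain_ne_iff (s t : V) (c : ℝ) :
    (∃ p q : G.Walk s t, p.length = G.dist s t ∧ q.length = G.dist s t ∧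
        (walkGain φ p).re = c ∧ (walkGain φ q).re = c ∧ walkGain φ p ≠ walkGain φ q) ↔
      ¬ {z ∈ shortestGains G φ s t | z.re = c}.Subsingleton := by
  rw [Set.not_subsingleton_iff]
  constructor
  · rintro ⟨p, q, hp, hq, hpc, hqc, hne⟩
    exact ⟨_, ⟨⟨p, hp, rfl⟩, hpc⟩, _, ⟨⟨q, hq, rfl⟩, hqc⟩, hne⟩
  · rintro ⟨_, ⟨⟨p, hp, rfl⟩, hpc⟩, _, ⟨⟨q, hq, rfl⟩, hqc⟩, hne⟩
    exact ⟨p, q, hp, hq, hpc, hqc, hne⟩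

theorem lexMaxGain_shortestGains_eq_conj_iff [Finite V] (hφ : IsGain G φ) (s t : V) :
    lexMaxGain (shortestGains G φ s t) = conj (lexMaxGain (shortestGains G φ t s)) ↔
      {z ∈ shortestGains G φ s t |
        z.re = sSup (Complex.re '' shortestGains G φ s t)}.Subsingleton := by
  rw [shortestGains_swap hφ s t]
  exact lexMaxGain_eq_conj_lexMaxGain_image_conj_iff (shortestGains_finite s t)

theorem lexMinGain_shortestGains_eq_conj_iff [Finite V] (hφ : IsGain G φ) (s t : V) :
    lexMinGain (shortestGains G φ s t) = conj (lexMinGain (shortestGains G φ t s)) ↔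
      {z ∈ shortestGains G φ s t |
        z.re = sInf (Complex.re '' shortestGains G φ s t)}.Subsingleton := by
  rw [shortestGains_swap hφ s t]
  exact lexMinGain_eq_conj_lexMinGain_image_conj_iff (shortestGains_finite s t)

/-- The common shape of `Dmax` and `Dmin`; `sel` picks one gain out of each set of shortest-path
gains. -/
def gainDistMatrix (G : SimpleGraph V) (φ : V → V → ℂ) (sel : Set ℂ → ℂ)
    (lt : V → V → Prop) : Matrix V V ℂ := fun s t =>
  if lt s t then sel (shortestGains G φ s t) * (G.dist s t : ℂ)
  else if lt t s then conj (sel (shortestGains G φ t s)) * (G.dist s t : ℂ)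
  else 0

theorem Dmax_eq_gainDistMatrix [Fintype V] [DecidableEq V] (lt : V → V → Prop) :
    Dmax G φ lt = gainDistMatrix G φ lexMaxGain lt := rfl

theorem Dmin_eq_gainDistMatrix [Fintype V] [DecidableEq V] (lt : V → V → Prop) :
    Dmin G φ lt = gainDistMatrix G φ lexMinGain lt := rfl

theorem gainDistMatrix_lt_eq_gt_iff [LinearOrder V] (hconn : G.Connected) (sel : Set ℂ → ℂ) :
    gainDistMatrix G φ sel (· < ·) = gainDistMatrix G φ sel (fun a b => b < a) ↔
      ∀ s t, s ≠ t → sel (shortestGains G φ s t) = conj (sel (shortestGains G φ t s)) := by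
  constructor
  · intro h s t hst
    have hd : (G.dist s t : ℂ) ≠ 0 := by exact_mod_cast (hconn.pos_dist_of_ne hst).ne'
    have hst' := congrFun₂ h s t
    rcases hst.lt_or_gt with hlt | hlt
    · simpa [gainDistMatrix, hlt, hlt.not_gt, hd] using hst'
    · simpa [gainDistMatrix, hlt, hlt.not_gt, hd] using hst'.symm
  · intro h
    ext s t
    rcases lt_trichotomy s t with hlt | rfl | hlt
    · simp [gainDistMatrix, hlt, hlt.not_gt, h s t hlt.ne]
    · simp [gainDistMatrix]
    · simp [gainDistMatrix, hlt, hlt.not_gt, h t s hlt.ne]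

end GainGraph

/-- a gain graph fails to be order independent iff some pair of vertices admits
two shortest paths in `P^max` (or in `P^min`) with different gains. -/
theorem not_orderIndependent_iff {V : Type*} [Fintype V] [DecidableEq V] [LinearOrder V]
    (G : SimpleGraph V) (hconn : G.Connected) (φ : V → V → ℂ) (hφ : IsGain G φ) :
    ¬ OrderIndependent G φ ↔ ∃ s t : V,
      (∃ p q : G.Walk s t, p.length = G.dist s t ∧ q.length = G.dist s t ∧
        (walkGain φ p).re = sSup (Complex.re '' shortestGains G φ s t) ∧
        (walkGain φ q).re = sSup (Complex.re '' shortestGains G φ s t) ∧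
        walkGain φ p ≠ walkGain φ q) ∨
      (∃ p q : G.Walk s t, p.length = G.dist s t ∧ q.length = G.dist s t ∧
        (walkGain φ p).re = sInf (Complex.re '' shortestGains G φ s t) ∧
        (walkGain φ q).re = sInf (Complex.re '' shortestGains G φ s t) ∧
        walkGain φ p ≠ walkGain φ q) := by
  simp only [OrderIndependent, Dmax_eq_gainDistMatrix, Dmin_eq_gainDistMatrix,
    gainDistMatrix_lt_eq_gt_iff hconn, lexMaxGain_shortestGains_eq_conj_iff hφ,
    lexMinGain_shortestGains_eq_conj_iff hφ, exists_shortest_walks_gain_ne_iff]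
  have hself (s : V) (c : ℝ) : {z ∈ shortestGains G φ s s | z.re = c}.Subsingleton := by
    rw [shortestGains_self]
    exact Set.subsingleton_singleton.anti (Set.sep_subset _ _)
  constructor
  · intro h
    by_contra! h'
    exact h ⟨fun s t _ => (h' s t).1, fun s t _ => (h' s t).2⟩
  · rintro ⟨s, t, hst⟩ ⟨hmax, hmin⟩
    obtain rfl | hne := eq_or_ne s t
    · exact hst.elim (· (hself s _)) (· (hself s _))
    · exact hst.elim (· (hmax s t hne)) (· (hmin s t hne))

end GG
end
end
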